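/- arXiv:2403.10383 — 4 statements merged into one kernel-verified Lean document; each statement's English description precedes it below -/
import Mathlib

section
/- For three point vortices evolving under the point-vortex equations, the squared pairwise distances satisfy d(ℓ₂₃²)/dt = 4σA Γ₁(ℓ₁₂⁻² - ℓ₃₁⁻²), d(ℓ₃₁²)/dt = 4σA Γ₂(ℓ₂₃⁻² - ℓ₁₂⁻²), d(ℓ₁₂²)/dt = 4σA Γ₃(ℓ₃₁⁻² - ℓ₂₃⁻²), where A is the area of the triangle formed by the vortices and σA = (1/2)((r₂ - r₁) × (r₃ - r₁)) (the signed area up to sign convention). -/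
/-!
Differentiating `ℓᵢⱼ² = (xᵢ - xⱼ)² + (yᵢ - yⱼ)²` gives `2 (rᵢ - rⱼ) · (vᵢ - vⱼ)`. The velocity that
`i` and `j` induce on each other is perpendicular to `rᵢ - rⱼ`, so only the third vortex `k`
contributes, namely `2 Γₖ c (1/ℓⱼₖ² - 1/ℓᵢₖ²)` with `c = (rᵢ - rⱼ) × (rᵢ - rₖ) = (rᵢ - rⱼ) × (rⱼ - rₖ)`,
and `c` is twice the signed area of the triangle `rᵢ rⱼ rₖ`.
-/

theorem HasDerivAt.sub_sq_add_sub_sq {f g h k : ℝ → ℝ} {f' g' h' k' t : ℝ}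
    (hf : HasDerivAt f f' t) (hg : HasDerivAt g g' t) (hh : HasDerivAt h h' t)
    (hk : HasDerivAt k k' t) :
    HasDerivAt (fun s => (f s - g s) ^ 2 + (h s - k s) ^ 2)
      (2 * ((f t - g t) * (f' - g') + (h t - k t) * (h' - k'))) t := by
  refine (((hf.sub hg).pow 2).add ((hh.sub hk).pow 2)).congr_deriv ?_
  simp only [Pi.sub_apply]
  ring

theorem vortex_pair_distance_rate (Γi Γj Γk xi yi xj yj xk yk : ℝ) :
    2 * ((xi - xj) *
          (-(Γj * (yi - yj) / ((xi - xj) ^ 2 + (yi - yj) ^ 2)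
            + Γk * (yi - yk) / ((xi - xk) ^ 2 + (yi - yk) ^ 2))
          - -(Γi * (yj - yi) / ((xj - xi) ^ 2 + (yj - yi) ^ 2)
            + Γk * (yj - yk) / ((xj - xk) ^ 2 + (yj - yk) ^ 2)))
        + (yi - yj) *
          ((Γj * (xi - xj) / ((xi - xj) ^ 2 + (yi - yj) ^ 2)
            + Γk * (xi - xk) / ((xi - xk) ^ 2 + (yi - yk) ^ 2))
          - (Γi * (xj - xi) / ((xj - xi) ^ 2 + (yj - yi) ^ 2)
            + Γk * (xj - xk) / ((xj - xk) ^ 2 + (yj - yk) ^ 2))))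
      = -2 * Γk * ((xj - xi) * (yk - yi) - (yj - yi) * (xk - xi))
          * (1 / ((xi - xk) ^ 2 + (yi - yk) ^ 2) - 1 / ((xj - xk) ^ 2 + (yj - yk) ^ 2)) := by
  ring

theorem grobli_distance_equations_general (Γ1 Γ2 Γ3 : ℝ) (x1 y1 x2 y2 x3 y3 : ℝ → ℝ)
    (h1x : ∀ t : ℝ, HasDerivAt x1
      (-(Γ2 * (y1 t - y2 t) / ((x1 t - x2 t) ^ 2 + (y1 t - y2 t) ^ 2)
        + Γ3 * (y1 t - y3 t) / ((x1 t - x3 t) ^ 2 + (y1 t - y3 t) ^ 2))) t)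
    (h1y : ∀ t : ℝ, HasDerivAt y1
      (Γ2 * (x1 t - x2 t) / ((x1 t - x2 t) ^ 2 + (y1 t - y2 t) ^ 2)
        + Γ3 * (x1 t - x3 t) / ((x1 t - x3 t) ^ 2 + (y1 t - y3 t) ^ 2)) t)
    (h2x : ∀ t : ℝ, HasDerivAt x2
      (-(Γ1 * (y2 t - y1 t) / ((x2 t - x1 t) ^ 2 + (y2 t - y1 t) ^ 2)
        + Γ3 * (y2 t - y3 t) / ((x2 t - x3 t) ^ 2 + (y2 t - y3 t) ^ 2))) t)
    (h2y : ∀ t : ℝ, HasDerivAt y2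
      (Γ1 * (x2 t - x1 t) / ((x2 t - x1 t) ^ 2 + (y2 t - y1 t) ^ 2)
        + Γ3 * (x2 t - x3 t) / ((x2 t - x3 t) ^ 2 + (y2 t - y3 t) ^ 2)) t)
    (h3x : ∀ t : ℝ, HasDerivAt x3
      (-(Γ1 * (y3 t - y1 t) / ((x3 t - x1 t) ^ 2 + (y3 t - y1 t) ^ 2)
        + Γ2 * (y3 t - y2 t) / ((x3 t - x2 t) ^ 2 + (y3 t - y2 t) ^ 2))) t)
    (h3y : ∀ t : ℝ, HasDerivAt y3
      (Γ1 * (x3 t - x1 t) / ((x3 t - x1 t) ^ 2 + (y3 t - y1 t) ^ 2)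
        + Γ2 * (x3 t - x2 t) / ((x3 t - x2 t) ^ 2 + (y3 t - y2 t) ^ 2)) t) :
    ∀ t : ℝ,
      -- signed area σA; the paper's σ is +1 for a clockwise-ordered triangle,
      -- so σA = -(1/2)((r₂-r₁) × (r₃-r₁)) with the counterclockwise-positive cross product
      let sA := -((1 / 2) * ((x2 t - x1 t) * (y3 t - y1 t) - (y2 t - y1 t) * (x3 t - x1 t)))
      HasDerivAt (fun s => (x2 s - x3 s) ^ 2 + (y2 s - y3 s) ^ 2)
        (4 * sA * Γ1 * (1 / ((x1 t - x2 t) ^ 2 + (y1 t - y2 t) ^ 2)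
          - 1 / ((x3 t - x1 t) ^ 2 + (y3 t - y1 t) ^ 2))) t ∧
      HasDerivAt (fun s => (x3 s - x1 s) ^ 2 + (y3 s - y1 s) ^ 2)
        (4 * sA * Γ2 * (1 / ((x2 t - x3 t) ^ 2 + (y2 t - y3 t) ^ 2)
          - 1 / ((x1 t - x2 t) ^ 2 + (y1 t - y2 t) ^ 2))) t ∧
      HasDerivAt (fun s => (x1 s - x2 s) ^ 2 + (y1 s - y2 s) ^ 2)
        (4 * sA * Γ3 * (1 / ((x3 t - x1 t) ^ 2 + (y3 t - y1 t) ^ 2)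
          - 1 / ((x2 t - x3 t) ^ 2 + (y2 t - y3 t) ^ 2))) t := by
  intro t
  refine ⟨((h2x t).sub_sq_add_sub_sq (h3x t) (h2y t) (h3y t)).congr_deriv ?_,
    ((h3x t).sub_sq_add_sub_sq (h1x t) (h3y t) (h1y t)).congr_deriv ?_,
    ((h1x t).sub_sq_add_sub_sq (h2x t) (h1y t) (h2y t)).congr_deriv ?_⟩
  · linear_combination vortex_pair_distance_rate Γ2 Γ3 Γ1 (x2 t) (y2 t) (x3 t) (y3 t) (x1 t) (y1 t)
  · linear_combination vortex_pair_distance_rate Γ3 Γ1 Γ2 (x3 t) (y3 t) (x1 t) (y1 t) (x2 t) (y2 t)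
  · linear_combination vortex_pair_distance_rate Γ1 Γ2 Γ3 (x1 t) (y1 t) (x2 t) (y2 t) (x3 t) (y3 t)

/-- Gröbli's equations: evolution of the squared pairwise distances for three
point vortices, where `σA = (1/2)((r₂-r₁) × (r₃-r₁))` is the signed area. -/
theorem grobli_distance_equations (Γ1 Γ2 Γ3 : ℝ) (x1 y1 x2 y2 x3 y3 : ℝ → ℝ)
    (hsep : ∀ t : ℝ,
      0 < (x1 t - x2 t) ^ 2 + (y1 t - y2 t) ^ 2 ∧
      0 < (x2 t - x3 t) ^ 2 + (y2 t - y3 t) ^ 2 ∧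
      0 < (x3 t - x1 t) ^ 2 + (y3 t - y1 t) ^ 2)
    (h1x : ∀ t : ℝ, HasDerivAt x1
      (-(Γ2 * (y1 t - y2 t) / ((x1 t - x2 t) ^ 2 + (y1 t - y2 t) ^ 2)
        + Γ3 * (y1 t - y3 t) / ((x1 t - x3 t) ^ 2 + (y1 t - y3 t) ^ 2))) t)
    (h1y : ∀ t : ℝ, HasDerivAt y1
      (Γ2 * (x1 t - x2 t) / ((x1 t - x2 t) ^ 2 + (y1 t - y2 t) ^ 2)
        + Γ3 * (x1 t - x3 t) / ((x1 t - x3 t) ^ 2 + (y1 t - y3 t) ^ 2)) t)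
    (h2x : ∀ t : ℝ, HasDerivAt x2
      (-(Γ1 * (y2 t - y1 t) / ((x2 t - x1 t) ^ 2 + (y2 t - y1 t) ^ 2)
        + Γ3 * (y2 t - y3 t) / ((x2 t - x3 t) ^ 2 + (y2 t - y3 t) ^ 2))) t)
    (h2y : ∀ t : ℝ, HasDerivAt y2
      (Γ1 * (x2 t - x1 t) / ((x2 t - x1 t) ^ 2 + (y2 t - y1 t) ^ 2)
        + Γ3 * (x2 t - x3 t) / ((x2 t - x3 t) ^ 2 + (y2 t - y3 t) ^ 2)) t)
    (h3x : ∀ t : ℝ, HasDerivAt x3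
      (-(Γ1 * (y3 t - y1 t) / ((x3 t - x1 t) ^ 2 + (y3 t - y1 t) ^ 2)
        + Γ2 * (y3 t - y2 t) / ((x3 t - x2 t) ^ 2 + (y3 t - y2 t) ^ 2))) t)
    (h3y : ∀ t : ℝ, HasDerivAt y3
      (Γ1 * (x3 t - x1 t) / ((x3 t - x1 t) ^ 2 + (y3 t - y1 t) ^ 2)
        + Γ2 * (x3 t - x2 t) / ((x3 t - x2 t) ^ 2 + (y3 t - y2 t) ^ 2)) t) :
    ∀ t : ℝ,
      -- signed area σA; the paper's σ is +1 for a clockwise-ordered triangle,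
      -- so σA = -(1/2)((r₂-r₁) × (r₃-r₁)) with the counterclockwise-positive cross product
      let sA := -((1 / 2) * ((x2 t - x1 t) * (y3 t - y1 t) - (y2 t - y1 t) * (x3 t - x1 t)))
      HasDerivAt (fun s => (x2 s - x3 s) ^ 2 + (y2 s - y3 s) ^ 2)
        (4 * sA * Γ1 * (1 / ((x1 t - x2 t) ^ 2 + (y1 t - y2 t) ^ 2)
          - 1 / ((x3 t - x1 t) ^ 2 + (y3 t - y1 t) ^ 2))) t ∧
      HasDerivAt (fun s => (x3 s - x1 s) ^ 2 + (y3 s - y1 s) ^ 2)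
        (4 * sA * Γ2 * (1 / ((x2 t - x3 t) ^ 2 + (y2 t - y3 t) ^ 2)
          - 1 / ((x1 t - x2 t) ^ 2 + (y1 t - y2 t) ^ 2))) t ∧
      HasDerivAt (fun s => (x1 s - x2 s) ^ 2 + (y1 s - y2 s) ^ 2)
        (4 * sA * Γ3 * (1 / ((x3 t - x1 t) ^ 2 + (y3 t - y1 t) ^ 2)
          - 1 / ((x2 t - x3 t) ^ 2 + (y2 t - y3 t) ^ 2))) t :=
  grobli_distance_equations_general Γ1 Γ2 Γ3 x1 y1 x2 y2 x3 y3 h1x h1y h2x h2y h3x h3y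
end

section
/- For the reduced system for three identical vortices (Γ₁=Γ₂=Γ₃=1) with Θ = 1, the vector field dX/dt = 4Y ∂H/∂Z, dY/dt = 4Z ∂H/∂X - 4X ∂H/∂Z, dZ/dt = -4Y ∂H/∂X with H = -(1/2)[log(1+Z) + log(1 - Z/2 - √3 X/2) + log(1 - Z/2 + √3 X/2)] vanishes at the five points (0,0,1), (±√3/2, 0, -1/2), and (0, ±1, 0) on the unit sphere X²+Y²+Z²=1. -/
/-- The Hamiltonian of the reduced system for three identical vortices with Θ = 1. -/
noncomputable def H111 (X Z : ℝ) : ℝ :=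
  -(1 / 2) * (Real.log (1 + Z)
    + Real.log (1 - Z / 2 - Real.sqrt 3 * X / 2)
    + Real.log (1 - Z / 2 + Real.sqrt 3 * X / 2))

/-- Partial derivative ∂H/∂X. -/
noncomputable def H111X (X Z : ℝ) : ℝ := deriv (fun X' => H111 X' Z) X

/-- Partial derivative ∂H/∂Z. -/
noncomputable def H111Z (X Z : ℝ) : ℝ := deriv (fun Z' => H111 X Z') Z

lemma H111X_eq (X Z : ℝ) (h2 : 0 < 1 - Z / 2 - Real.sqrt 3 * X / 2)
    (h3 : 0 < 1 - Z / 2 + Real.sqrt 3 * X / 2) :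
    H111X X Z = -(1 / 2) * ((-(Real.sqrt 3 * 1 / 2)) / (1 - Z / 2 - Real.sqrt 3 * X / 2)
      + (Real.sqrt 3 * 1 / 2) / (1 - Z / 2 + Real.sqrt 3 * X / 2)) := by
  have hlin : HasDerivAt (fun x : ℝ => Real.sqrt 3 * x / 2) (Real.sqrt 3 * 1 / 2) X :=
    ((hasDerivAt_id X).const_mul (Real.sqrt 3)).div_const 2
  have l1 : HasDerivAt (fun _ : ℝ => Real.log (1 + Z)) 0 X := hasDerivAt_const _ _
  have l2 : HasDerivAt (fun x : ℝ => Real.log (1 - Z / 2 - Real.sqrt 3 * x / 2))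
      ((-(Real.sqrt 3 * 1 / 2)) / (1 - Z / 2 - Real.sqrt 3 * X / 2)) X := by
    have := (hlin.const_sub (1 - Z / 2)).log h2.ne'
    simpa [sub_sub] using this
  have l3 : HasDerivAt (fun x : ℝ => Real.log (1 - Z / 2 + Real.sqrt 3 * x / 2))
      ((Real.sqrt 3 * 1 / 2) / (1 - Z / 2 + Real.sqrt 3 * X / 2)) X := by
    have := (hlin.const_add (1 - Z / 2)).log h3.ne'
    simpa [add_comm] using this
  have h : HasDerivAt (fun x : ℝ => H111 x Z)
      (-(1 / 2) * ((0 + (-(Real.sqrt 3 * 1 / 2)) / (1 - Z / 2 - Real.sqrt 3 * X / 2))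
        + (Real.sqrt 3 * 1 / 2) / (1 - Z / 2 + Real.sqrt 3 * X / 2))) X :=
    ((l1.add l2).add l3).const_mul (-(1 / 2))
  rw [H111X, h.deriv]
  ring

lemma H111Z_eq (X Z : ℝ) (h1 : 0 < 1 + Z) (h2 : 0 < 1 - Z / 2 - Real.sqrt 3 * X / 2)
    (h3 : 0 < 1 - Z / 2 + Real.sqrt 3 * X / 2) :
    H111Z X Z = -(1 / 2) * (1 / (1 + Z)
      + (-(1 / 2)) / (1 - Z / 2 - Real.sqrt 3 * X / 2)
      + (-(1 / 2)) / (1 - Z / 2 + Real.sqrt 3 * X / 2)) := by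
  have l1 : HasDerivAt (fun z : ℝ => Real.log (1 + z)) (1 / (1 + Z)) Z := by
    have := ((hasDerivAt_id Z).const_add (1 : ℝ)).log h1.ne'
    simpa using this
  have hlin : HasDerivAt (fun z : ℝ => 1 - z / 2) (-(1 / 2) : ℝ) Z := by
    have := ((hasDerivAt_id Z).div_const 2).const_sub 1
    simpa using this
  have l2 : HasDerivAt (fun z : ℝ => Real.log (1 - z / 2 - Real.sqrt 3 * X / 2))
      ((-(1 / 2)) / (1 - Z / 2 - Real.sqrt 3 * X / 2)) Z := by
    have := (hlin.sub_const (Real.sqrt 3 * X / 2)).log h2.ne'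
    simpa using this
  have l3 : HasDerivAt (fun z : ℝ => Real.log (1 - z / 2 + Real.sqrt 3 * X / 2))
      ((-(1 / 2)) / (1 - Z / 2 + Real.sqrt 3 * X / 2)) Z := by
    have := (hlin.add_const (Real.sqrt 3 * X / 2)).log h3.ne'
    simpa using this
  have h : HasDerivAt (fun z : ℝ => H111 X z)
      (-(1 / 2) * ((1 / (1 + Z) + (-(1 / 2)) / (1 - Z / 2 - Real.sqrt 3 * X / 2))
        + (-(1 / 2)) / (1 - Z / 2 + Real.sqrt 3 * X / 2))) Z :=
    ((l1.add l2).add l3).const_mul (-(1 / 2))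
  rw [H111Z, h.deriv]


/-- The reduced Nambu vector field for three identical vortices vanishes at the
five equilibria (0,0,1), (±√3/2, 0, -1/2), (0, ±1, 0), all on the unit sphere. -/
theorem identical_vortices_equilibria :
    ∀ p : ℝ × ℝ × ℝ,
      p ∈ ({(0, 0, 1), (Real.sqrt 3 / 2, 0, -(1 / 2)),
            (-(Real.sqrt 3 / 2), 0, -(1 / 2)), (0, 1, 0), (0, -1, 0)} :
            Set (ℝ × ℝ × ℝ)) →
      (4 * p.2.1 * H111Z p.1 p.2.2 = 0 ∧
       4 * p.2.2 * H111X p.1 p.2.2 - 4 * p.1 * H111Z p.1 p.2.2 = 0 ∧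
       -(4 * p.2.1 * H111X p.1 p.2.2) = 0) ∧
      p.1 ^ 2 + p.2.1 ^ 2 + p.2.2 ^ 2 = 1 := by
  have hs : Real.sqrt 3 ^ 2 = 3 := Real.sq_sqrt (by norm_num)
  have hs0 : 0 < Real.sqrt 3 := Real.sqrt_pos.mpr (by norm_num)
  have hs2 : Real.sqrt 3 < 2 := by nlinarith
  intro p hp
  simp only [Set.mem_insert_iff, Set.mem_singleton_iff] at hp
  rcases hp with rfl | rfl | rfl | rfl | rfl <;> simp only []
  · refine ⟨⟨by ring, ?_, by ring⟩, by norm_num⟩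
    rw [H111X_eq 0 1 (by norm_num) (by norm_num)]
    ring
  · have h2 : (0:ℝ) < 1 - (-(1/2):ℝ) / 2 - Real.sqrt 3 * (Real.sqrt 3 / 2) / 2 := by nlinarith
    have h3 : (0:ℝ) < 1 - (-(1/2):ℝ) / 2 + Real.sqrt 3 * (Real.sqrt 3 / 2) / 2 := by nlinarith
    refine ⟨⟨by ring, ?_, by ring⟩, by nlinarith⟩
    rw [H111X_eq _ _ h2 h3, H111Z_eq _ _ (by norm_num) h2 h3]
    have e2 : 1 - (-(1/2):ℝ) / 2 - Real.sqrt 3 * (Real.sqrt 3 / 2) / 2 = 1/2 := by nlinarith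
    have e3 : 1 - (-(1/2):ℝ) / 2 + Real.sqrt 3 * (Real.sqrt 3 / 2) / 2 = 2 := by nlinarith
    rw [e2, e3]
    norm_num
    ring
  · have h2 : (0:ℝ) < 1 - (-(1/2):ℝ) / 2 - Real.sqrt 3 * (-(Real.sqrt 3 / 2)) / 2 := by nlinarith
    have h3 : (0:ℝ) < 1 - (-(1/2):ℝ) / 2 + Real.sqrt 3 * (-(Real.sqrt 3 / 2)) / 2 := by nlinarith
    refine ⟨⟨by ring, ?_, by ring⟩, by nlinarith⟩
    rw [H111X_eq _ _ h2 h3, H111Z_eq _ _ (by norm_num) h2 h3]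
    have e2 : 1 - (-(1/2):ℝ) / 2 - Real.sqrt 3 * (-(Real.sqrt 3 / 2)) / 2 = 2 := by nlinarith
    have e3 : 1 - (-(1/2):ℝ) / 2 + Real.sqrt 3 * (-(Real.sqrt 3 / 2)) / 2 = 1/2 := by nlinarith
    rw [e2, e3]
    norm_num
    ring
  · have hX : H111X 0 0 = 0 := by
      rw [H111X_eq 0 0 (by norm_num) (by norm_num)]; ring
    have hZ : H111Z 0 0 = 0 := by
      rw [H111Z_eq 0 0 (by norm_num) (by norm_num) (by norm_num)]; norm_num
    exact ⟨⟨by rw [hZ]; ring, by rw [hX, hZ]; ring, by rw [hX]; ring⟩, by norm_num⟩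
  · have hX : H111X 0 0 = 0 := by
      rw [H111X_eq 0 0 (by norm_num) (by norm_num)]; ring
    have hZ : H111Z 0 0 = 0 := by
      rw [H111Z_eq 0 0 (by norm_num) (by norm_num) (by norm_num)]; norm_num
    exact ⟨⟨by rw [hZ]; ring, by rw [hX, hZ]; ring, by rw [hX]; ring⟩, by norm_num⟩
end

section
/- For the (1,1,-1) reduced system, both H = -(1/2)log(Z+Θ) + (1/2)log(Z²-X²) and C = Z² - X² - Y² are conserved along solutions of dX/dt = -2Y/(Z+Θ) + 4ZY/(Z²-X²), dY/dt = 2X/(Z+Θ), dZ/dt = 4XY/(Z²-X²). -/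
/-!
Along the flow, `Z Ż - X Ẋ - Y Ẏ = 0`: the `4XYZ/(Z²-X²)` and `2XY/(Z+Θ)` contributions cancel
in pairs, which is the Casimir. Consequently `Z Ż - X Ẋ = Y Ẏ = 2XY/(Z+Θ)`, so both terms of `Ḣ`,
`Ż/(2(Z+Θ))` and `(Z Ż - X Ẋ)/(Z²-X²)`, equal `2XY/((Z+Θ)(Z²-X²))`.
-/

namespace ReducedSystem

noncomputable section

def fieldX (Θ x y z : ℝ) : ℝ := -2 * y / (z + Θ) + 4 * z * y / (z ^ 2 - x ^ 2)

def fieldY (Θ x z : ℝ) : ℝ := 2 * x / (z + Θ)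

def fieldZ (x y z : ℝ) : ℝ := 4 * x * y / (z ^ 2 - x ^ 2)

variable (Θ x y z : ℝ)

theorem casimir_orthogonal :
    z * fieldZ x y z - x * fieldX Θ x y z - y * fieldY Θ x z = 0 := by
  unfold fieldX fieldY fieldZ
  ring

theorem hamiltonian_orthogonal :
    -(1 / 2) * (fieldZ x y z / (z + Θ)) +
      (1 / 2) * (2 * (z * fieldZ x y z - x * fieldX Θ x y z) / (z ^ 2 - x ^ 2)) = 0 := by
  unfold fieldX fieldZ
  ring

end

end ReducedSystem

section

variable {X Y Z : ℝ → ℝ} {x' y' z' t : ℝ}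

theorem HasDerivAt.sq_sub_sq (hX : HasDerivAt X x' t) (hZ : HasDerivAt Z z' t) :
    HasDerivAt (fun s => Z s ^ 2 - X s ^ 2) (2 * (Z t * z' - X t * x')) t :=
  ((hZ.fun_pow 2).sub (hX.fun_pow 2)).congr_deriv (by push_cast; ring)

theorem HasDerivAt.sq_sub_sq_sub_sq (hX : HasDerivAt X x' t) (hY : HasDerivAt Y y' t)
    (hZ : HasDerivAt Z z' t) :
    HasDerivAt (fun s => Z s ^ 2 - X s ^ 2 - Y s ^ 2) (2 * (Z t * z' - X t * x' - Y t * y')) t :=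
  ((hX.sq_sub_sq hZ).sub (hY.fun_pow 2)).congr_deriv (by push_cast; ring)

end

open ReducedSystem in
/-- Along solutions of the (1,1,-1) reduced system, both the Hamiltonian
H = -(1/2)log(Z+Θ) + (1/2)log(Z²-X²) and the Casimir C = Z² - X² - Y² are
conserved. -/
theorem reduced_system_conserved (Θ : ℝ) (X Y Z : ℝ → ℝ)
    (hdom : ∀ t : ℝ, 0 < Z t + Θ ∧ (X t) ^ 2 < (Z t) ^ 2)
    (hX : ∀ t : ℝ, HasDerivAt X
      (-2 * Y t / (Z t + Θ) + 4 * Z t * Y t / ((Z t) ^ 2 - (X t) ^ 2)) t)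
    (hY : ∀ t : ℝ, HasDerivAt Y (2 * X t / (Z t + Θ)) t)
    (hZ : ∀ t : ℝ, HasDerivAt Z (4 * X t * Y t / ((Z t) ^ 2 - (X t) ^ 2)) t) :
    ∀ t : ℝ,
      HasDerivAt (fun s =>
        -(1 / 2) * Real.log (Z s + Θ) + (1 / 2) * Real.log ((Z s) ^ 2 - (X s) ^ 2)) 0 t ∧
      HasDerivAt (fun s => (Z s) ^ 2 - (X s) ^ 2 - (Y s) ^ 2) 0 t := by
  intro t
  obtain ⟨hA, hD⟩ := hdom t
  have hlogA := ((hZ t).add_const Θ).log hA.ne'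
  have hlogD := ((hX t).sq_sub_sq (hZ t)).log (sub_pos.mpr hD).ne'
  constructor
  · exact ((hlogA.const_mul _).add (hlogD.const_mul _)).congr_deriv
      (hamiltonian_orthogonal Θ (X t) (Y t) (Z t))
  · exact ((hX t).sq_sub_sq_sub_sq (hY t) (hZ t)).congr_deriv
      (mul_eq_zero_of_right 2 (casimir_orthogonal Θ (X t) (Y t) (Z t)))
end

section
/- For the (1,1,-1) reduced system with Θ > 0, the point (X,Y,Z) = (0,0,Θ) is an equilibrium on the hyperboloid Z²-X²-Y²=Θ², and the Hamiltonian value there is H = (1/2) log(Θ/2); moreover for Θ > 0 it is the only equilibrium of the system with Z > 0 satisfying Z²-X²-Y²=Θ². -/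
lemma log_sq_sub_log_add_self {Θ : ℝ} (hΘ : 0 < Θ) :
    Real.log (Θ ^ 2) - Real.log (Θ + Θ) = Real.log (Θ / 2) := by
  rw [← Real.log_div (by positivity) (by positivity)]
  congr 1
  field_simp
  ring

lemma eq_zero_of_dX_eq_zero {Y Z Θ : ℝ} (hZ : 0 < Z) (hΘ : 0 < Θ)
    (h : -2 * Y / (Z + Θ) + 4 * Z * Y / (Z ^ 2 - 0 ^ 2) = 0) : Y = 0 := by
  have factor : -2 * Y / (Z + Θ) + 4 * Z * Y / (Z ^ 2 - 0 ^ 2)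
      = Y * ((2 * Z + 4 * Θ) / (Z * (Z + Θ))) := by
    field_simp
    ring
  have factor_pos : 0 < (2 * Z + 4 * Θ) / (Z * (Z + Θ)) := by positivity
  rw [factor] at h
  exact (mul_eq_zero.mp h).resolve_right factor_pos.ne'

/-- For Θ > 0, the point (0,0,Θ) is an equilibrium of the (1,1,-1) reduced
system on the hyperboloid, its Hamiltonian value is (1/2)log(Θ/2), and it is
the only equilibrium with Z > 0 on the hyperboloid Z² - X² - Y² = Θ². -/
theorem collinear_equilibrium_unique (Θ : ℝ) (hΘ : 0 < Θ) :
    ((-2 * (0 : ℝ) / (Θ + Θ) + 4 * Θ * 0 / (Θ ^ 2 - 0 ^ 2) = 0 ∧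
      2 * (0 : ℝ) / (Θ + Θ) = 0 ∧
      4 * (0 : ℝ) * 0 / (Θ ^ 2 - 0 ^ 2) = 0) ∧
     Θ ^ 2 - (0 : ℝ) ^ 2 - (0 : ℝ) ^ 2 = Θ ^ 2 ∧
     -(1 / 2) * Real.log (Θ + Θ) + (1 / 2) * Real.log (Θ ^ 2 - 0 ^ 2)
       = (1 / 2) * Real.log (Θ / 2)) ∧
    ∀ X Y Z : ℝ, 0 < Z → 0 < Z + Θ → X ^ 2 < Z ^ 2 →
      Z ^ 2 - X ^ 2 - Y ^ 2 = Θ ^ 2 →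
      -2 * Y / (Z + Θ) + 4 * Z * Y / (Z ^ 2 - X ^ 2) = 0 →
      2 * X / (Z + Θ) = 0 →
      4 * X * Y / (Z ^ 2 - X ^ 2) = 0 →
      X = 0 ∧ Y = 0 ∧ Z = Θ := by
  refine ⟨⟨by simp, by ring, ?_⟩, ?_⟩
  · rw [← log_sq_sub_log_add_self hΘ]
    rw [zero_pow two_ne_zero, sub_zero]
    ring
  · intro X Y Z hZ hZΘ _ hyperboloid hX' hY' _
    obtain rfl : X = 0 := by simpa [hZΘ.ne'] using hY'
    obtain rfl : Y = 0 := eq_zero_of_dX_eq_zero hZ hΘ hX'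
    have hZsq : Z ^ 2 = Θ ^ 2 := by simpa using hyperboloid
    exact ⟨rfl, rfl, (sq_eq_sq₀ hZ.le hΘ.le).mp hZsq⟩
end
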